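/- arXiv:1702.06448 — 4 statements merged into one kernel-verified Lean document; each statement's English description precedes it below -/
import Mathlib

section
/- Let F be a field which is finitely generated over its prime field, and let E ⊆ F be a subfield which is isomorphic to F as a field. Then F is an algebraic extension of E. -/
/-!
Let `P` be the prime subfield of `F`. Every ring homomorphism fixes the prime field pointwise, so
`E ≅ F` is an isomorphism of `P`-algebras and `trdeg_P E = trdeg_P F`, which is finite because `F`
is finitely generated over `P`. The tower law `trdeg_P F = trdeg_P E + trdeg_E F` then forces
`trdeg_E F = 0`.
-/

universe u

theorem Algebra.isAlgebraic_of_trdeg_eq (K : Type*) (E L : Type u) [Field K] [Field E] [Field L]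
    [Algebra K E] [Algebra K L] [Algebra E L] [IsScalarTower K E L] [FinTrdeg K L]
    (h : trdeg K E = trdeg K L) : Algebra.IsAlgebraic E L := by
  have htower := trdeg_add_eq K E (A := L)
  rw [h] at htower
  rw [← trdeg_eq_zero_iff]
  exact Cardinal.eq_of_add_eq_add_left (htower.trans (add_zero _).symm) (trdeg_lt_aleph0 K L)

theorem Algebra.isAlgebraic_of_algEquiv (K : Type*) (E L : Type u) [Field K] [Field E] [Field L]
    [Algebra K E] [Algebra K L] [Algebra E L] [IsScalarTower K E L] [FinTrdeg K L]
    (e : E ≃ₐ[K] L) : Algebra.IsAlgebraic E L :=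
  isAlgebraic_of_trdeg_eq K E L e.trdeg_eq

theorem FinTrdeg.of_subfieldClosure_eq_top (K : Type*) {L : Type*} [Field K] [Field L]
    [Algebra K L] {s : Finset L} (hs : Subfield.closure (s : Set L) = ⊤) : FinTrdeg K L := by
  have hadj : IntermediateField.adjoin K (s : Set L) = ⊤ := top_unique fun x _ ↦
    Subfield.closure_le.2 (IntermediateField.subset_adjoin K _) (hs ▸ Subfield.mem_top x)
  have : Algebra.EssFiniteType K L := IntermediateField.fg_top_iff.mp ⟨s, hadj⟩
  infer_instance

theorem Subfield.apply_eq_self_of_mem_bot {F : Type*} [Field F] {E : Subfield F} (f : E →+* F)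
    {x : E} (hx : (x : F) ∈ (⊥ : Subfield F)) : f x = x := by
  rw [← Subfield.map_bot E.subtype] at hx
  obtain ⟨y, hy, hyx⟩ := Subfield.mem_map.1 hx
  obtain rfl : y = x := Subtype.ext hyx
  exact bot_le (a := f.eqLocusField E.subtype) hy

/-- If `F` is a field finitely generated over its prime field and `E` is a subfield of `F`
isomorphic to `F`, then `F` is algebraic over `E`. -/
theorem stmt1 {F : Type*} [Field F]
    (hfg : ∃ s : Finset F, Subfield.closure (s : Set F) = ⊤)
    (E : Subfield F) (hiso : Nonempty (E ≃+* F)) :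
    Algebra.IsAlgebraic E F := by
  obtain ⟨s, hs⟩ := hfg
  obtain ⟨φ⟩ := hiso
  let P := (⊥ : Subfield F)
  let : Algebra P E := (Subfield.inclusion (bot_le : P ≤ E)).toAlgebra
  have : IsScalarTower P E F := .of_algebraMap_eq fun _ ↦ rfl
  have : FinTrdeg P F := .of_subfieldClosure_eq_top P hs
  exact Algebra.isAlgebraic_of_algEquiv P E F
    (.ofRingEquiv (f := φ) fun x ↦ Subfield.apply_eq_self_of_mem_bot φ.toRingHom x.2)
end

section
/- There is a (unique) group homomorphism ι: G → G satisfying ι((n,τ)) = (n+1,τ) for every (n,τ) ∈ V(T), ι(a) = a, ι(b_i) = b_i for every i ∈ ℤ, and ι(t) = t. -/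
/-- Generators of the group `K`: tree vertices `(n,τ)`, the letter `a`, and letters `bᵢ`. -/
inductive KGen : Type
  | vert : ℕ → List ℤ → KGen
  | a : KGen
  | b : ℤ → KGen
  deriving DecidableEq

/-- The parent `(n,τ)⁻` of a vertex `(n,τ)` of the tree `T`. -/
def parent : ℕ → List ℤ → ℕ × List ℤ
  | n, [] => (n + 1, [])
  | n, τ => (n, τ.dropLast)

/-- Words over an alphabet `α` (a letter together with `true` for the letter itself,
`false` for its formal inverse). -/
abbrev Word (α : Type) := List (α × Bool)

/-- The word `u(x,y) = x y x² y x³ y ⋯ x¹⁰⁰ y`. -/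
def uWord {α : Type} (x y : α) : Word α :=
  (List.range 100).flatMap fun k => List.replicate (k + 1) (x, true) ++ [(y, true)]

/-- The relator words of the presentation of `K`:
`u((n,τ),a) ((n,τ)⁻)⁻¹` and `u((n,τ),bᵢ) ((n,τ⌢⟨i⟩))⁻¹`. -/
def KRelWords : Set (Word KGen) :=
  { w | (∃ (n : ℕ) (τ : List ℤ), w = uWord (KGen.vert n τ) KGen.a ++ [(KGen.vert (parent n τ).1 (parent n τ).2, false)]) ∨
        (∃ (n : ℕ) (τ : List ℤ) (i : ℤ), w = uWord (KGen.vert n τ) (KGen.b i) ++ [(KGen.vert n (τ ++ [i]), false)]) }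

/-- The relators of `K` as elements of the free group. -/
def KRels : Set (FreeGroup KGen) := FreeGroup.mk '' KRelWords

/-- The group `K`. -/
abbrev K := PresentedGroup KRels

/-- Generators of `G`: the generators of `K` together with the stable letter `t = none`. -/
abbrev GGen := Option KGen

/-- The relator words of the presentation of `G = ⟨K, t ∣ t bᵢ t⁻¹ = b_{i+1}⟩`:
the relators of `K` together with `t bᵢ t⁻¹ b_{i+1}⁻¹`. -/
def GRelWords : Set (Word GGen) :=
  (fun w : Word KGen => w.map fun p => (some p.1, p.2)) '' KRelWords ∪
    { w | ∃ i : ℤ, w = [((none : GGen), true), (some (KGen.b i), true), ((none : GGen), false),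
        (some (KGen.b (i + 1)), false)] }

/-- The relators of `G` as elements of the free group. -/
def GRels : Set (FreeGroup GGen) := FreeGroup.mk '' GRelWords

/-- The group `G`, the HNN extension of `K` along `bᵢ ↦ b_{i+1}`. -/
abbrev G := PresentedGroup GRels

/-- The vertex `(n,τ)` as an element of `G`. -/
def gvert (n : ℕ) (τ : List ℤ) : G := PresentedGroup.of (some (KGen.vert n τ))

/-- `a` as an element of `G`. -/
def ga : G := PresentedGroup.of (some KGen.a)

/-- `bᵢ` as an element of `G`. -/
def gb (i : ℤ) : G := PresentedGroup.of (some (KGen.b i))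

/-- The stable letter `t` as an element of `G`. -/
def gt' : G := PresentedGroup.of (none : GGen)


/-! The homomorphism is induced by the shift `(n,τ) ↦ (n+1,τ)` on generators (fixing `a`, `bᵢ`
and `t`), which maps each relator to a relator: the shift commutes with `u` and with taking
parents and children in `T`. Uniqueness holds because `G` is generated by its generators. -/

def kshift : KGen → KGen
  | KGen.vert n τ => KGen.vert (n + 1) τ
  | x => x

def gshift : GGen → GGen := Option.map kshift

lemma uWord_map {α β : Type} (g : α → β) (x y : α) :
    (uWord x y).map (fun p => (g p.1, p.2)) = uWord (g x) (g y) := by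
  simp [uWord, List.map_flatMap]

lemma parent_succ (n : ℕ) (τ : List ℤ) :
    parent (n + 1) τ = ((parent n τ).1 + 1, (parent n τ).2) := by
  cases τ <;> rfl

lemma mapsTo_kshift_KRelWords :
    Set.MapsTo (List.map fun p => (kshift p.1, p.2)) KRelWords KRelWords := by
  rintro _ (⟨n, τ, rfl⟩ | ⟨n, τ, i, rfl⟩)
  · refine Or.inl ⟨n + 1, τ, ?_⟩
    rw [List.map_append, uWord_map, parent_succ]
    rfl
  · refine Or.inr ⟨n + 1, τ, i, ?_⟩
    rw [List.map_append, uWord_map]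
    rfl

lemma mapsTo_gshift_GRels : Set.MapsTo (FreeGroup.map gshift) GRels GRels := by
  rintro _ ⟨w, hw, rfl⟩
  rw [FreeGroup.map.mk]
  refine ⟨_, ?_, rfl⟩
  rcases hw with ⟨v, hv, rfl⟩ | ⟨i, rfl⟩
  · refine Or.inl ⟨_, mapsTo_kshift_KRelWords hv, ?_⟩
    simp only [List.map_map]
    rfl
  · exact Or.inr ⟨i, rfl⟩

def shiftHom : G →* G := PresentedGroup.map (FreeGroup.map gshift) mapsTo_gshift_GRels

/-- There is a unique group homomorphism `ι : G → G` with `ι((n,τ)) = (n+1,τ)`, `ι(a) = a`,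
`ι(bᵢ) = bᵢ` and `ι(t) = t`. -/
theorem stmt5 : ∃! ι : G →* G,
    (∀ (n : ℕ) (τ : List ℤ), ι (gvert n τ) = gvert (n + 1) τ) ∧
    ι ga = ga ∧ (∀ i : ℤ, ι (gb i) = gb i) ∧ ι gt' = gt' := by
  refine ⟨shiftHom, ⟨fun _ _ => rfl, rfl, fun _ => rfl, rfl⟩, ?_⟩
  rintro ι ⟨hvert, ha, hb, ht⟩
  refine PresentedGroup.ext ?_
  rintro (_ | (⟨n, τ⟩ | _ | i))
  exacts [ht, hvert n τ, ha, hb i]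
end

section
/- The group homomorphism ι: G → G determined by ι((n,τ)) = (n+1,τ) for every (n,τ) ∈ V(T), ι(a) = a, ι(b_i) = b_i for every i ∈ ℤ, and ι(t) = t is injective, and its image is exactly the subgroup H; in particular, H is isomorphic to G. -/
/-- The subgroup `H` of `G` generated by `(1,⟨⟩)`, `a`, `b₀` and `t`. -/
def H : Subgroup G := Subgroup.closure {gvert 1 [], ga, gb 0, gt'}

/-!
The shift `(n,τ) ↦ (n+1,τ)` has a left inverse on the tree `T`, namely `(n+1,τ) ↦ (n,τ)`,
`(0,τ) ↦ (0,0⌢τ)`, which commutes with taking parents and children. Fixing `a`, the `bᵢ` and `t`,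
it therefore induces an endomorphism of `G` that is a left inverse of `ι`, so `ι` is injective.
The image of `ι` is generated by `(n+1,τ)`, `a`, `bᵢ`, `t`, and these lie in `H`: conjugating `b₀`
by powers of `t` gives every `bᵢ`, and the relations `u((n,τ),a) = (n,τ)⁻` and
`u((n,τ),bᵢ) = (n,τ⌢⟨i⟩)` produce every `(n+1,τ)` from `(1,⟨⟩)`.
-/

section Words

variable {α β M : Type} [Group M]

def Word.eval (f : α → M) (w : Word α) : M :=
  (w.map fun p => cond p.2 (f p.1) (f p.1)⁻¹).prod

theorem FreeGroup.lift_mk_eq_eval (f : α → M) (w : Word α) :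
    FreeGroup.lift f (FreeGroup.mk w) = Word.eval f w :=
  FreeGroup.lift_mk

theorem Word.eval_append (f : α → M) (w₁ w₂ : Word α) :
    Word.eval f (w₁ ++ w₂) = Word.eval f w₁ * Word.eval f w₂ := by
  simp [Word.eval]

theorem Word.eval_map_fst (f : β → M) (g : α → β) (w : Word α) :
    Word.eval f (w.map fun p => (g p.1, p.2)) = Word.eval (f ∘ g) w := by
  simp only [Word.eval, List.map_map]
  rfl

theorem Word.eval_singleton_inv (f : α → M) (x : α) : Word.eval f [(x, false)] = (f x)⁻¹ := by
  simp [Word.eval]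

def uProd (x y : M) : M := ((List.range 100).map fun k => x ^ (k + 1) * y).prod

theorem Word.eval_uWord (f : α → M) (x y : α) : Word.eval f (uWord x y) = uProd (f x) (f y) := by
  unfold uWord uProd Word.eval
  induction List.range 100 with
  | nil => simp
  | cons k l ih => simp [List.map_replicate, List.prod_replicate, ih, mul_assoc]

theorem uProd_mem {S : Subgroup M} {x y : M} (hx : x ∈ S) (hy : y ∈ S) : uProd x y ∈ S := by
  refine S.list_prod_mem fun z hz => ?_
  obtain ⟨k, -, rfl⟩ := List.mem_map.1 hz
  exact mul_mem (pow_mem hx _) hy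

theorem PresentedGroup.eval_of_eq_one {R : Set (Word α)} {w : Word α} (hw : w ∈ R) :
    Word.eval (PresentedGroup.of (rels := FreeGroup.mk '' R)) w = 1 := by
  rw [← FreeGroup.lift_mk_eq_eval, ← PresentedGroup.one_of_mem (Set.mem_image_of_mem _ hw)]
  exact (FreeGroup.lift_unique (PresentedGroup.mk _) fun _ => rfl).symm

theorem PresentedGroup.lift_eq_one_of_eval {R : Set (Word α)} {f : α → M}
    (h : ∀ w ∈ R, Word.eval f w = 1) : ∀ r ∈ FreeGroup.mk '' R, FreeGroup.lift f r = 1 := by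
  rintro _ ⟨w, hw, rfl⟩
  rw [FreeGroup.lift_mk_eq_eval, h w hw]

end Words

section Relations

variable {M : Type} [Group M]

theorem eval_kRelator_eq_one_iff {f : GGen → M} (x y z : KGen) :
    Word.eval f ((uWord x y ++ [(z, false)]).map fun p => (some p.1, p.2)) = 1 ↔
      uProd (f (some x)) (f (some y)) = f (some z) := by
  rw [Word.eval_map_fst, Word.eval_append, Word.eval_uWord, Word.eval_singleton_inv,
    mul_inv_eq_one]
  rfl

theorem eval_tRelator_eq_one_iff {f : GGen → M} (i : ℤ) :
    Word.eval f
        [(none, true), (some (KGen.b i), true), (none, false), (some (KGen.b (i + 1)), false)] = 1 ↔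
      f none * f (some (KGen.b i)) * (f none)⁻¹ = f (some (KGen.b (i + 1))) := by
  simp [Word.eval, ← mul_assoc, mul_inv_eq_one]

theorem uProd_gvert_ga (n : ℕ) (τ : List ℤ) :
    uProd (gvert n τ) ga = gvert (parent n τ).1 (parent n τ).2 :=
  (eval_kRelator_eq_one_iff _ _ _).1 <|
    PresentedGroup.eval_of_eq_one (Or.inl ⟨_, Or.inl ⟨n, τ, rfl⟩, rfl⟩)

theorem uProd_gvert_gb (n : ℕ) (τ : List ℤ) (i : ℤ) :
    uProd (gvert n τ) (gb i) = gvert n (τ ++ [i]) :=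
  (eval_kRelator_eq_one_iff _ _ _).1 <|
    PresentedGroup.eval_of_eq_one (Or.inl ⟨_, Or.inr ⟨n, τ, i, rfl⟩, rfl⟩)

theorem gt'_mul_gb_mul_inv (i : ℤ) : gt' * gb i * gt'⁻¹ = gb (i + 1) :=
  (eval_tRelator_eq_one_iff i).1 <| PresentedGroup.eval_of_eq_one (Or.inr ⟨i, rfl⟩)

end Relations

section Retraction

def retractVert : ℕ × List ℤ → ℕ × List ℤ
  | (0, τ) => (0, 0 :: τ)
  | (n + 1, τ) => (n, τ)

theorem retractVert_parent (n : ℕ) (τ : List ℤ) :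
    retractVert (parent n τ) = parent (retractVert (n, τ)).1 (retractVert (n, τ)).2 := by
  rcases n with _ | n <;> rcases τ with _ | ⟨x, τ⟩ <;> rfl

theorem retractVert_append (n : ℕ) (τ : List ℤ) (i : ℤ) :
    retractVert (n, τ ++ [i]) = ((retractVert (n, τ)).1, (retractVert (n, τ)).2 ++ [i]) := by
  rcases n with _ | n <;> rfl

def retractGen : GGen → G
  | none => gt'
  | some KGen.a => ga
  | some (KGen.b i) => gb i
  | some (KGen.vert n τ) => gvert (retractVert (n, τ)).1 (retractVert (n, τ)).2

theorem eval_retractGen_of_mem_GRelWords {w : Word GGen} (hw : w ∈ GRelWords) :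
    Word.eval retractGen w = 1 := by
  rcases hw with ⟨w, (⟨n, τ, rfl⟩ | ⟨n, τ, i, rfl⟩), rfl⟩ | ⟨i, rfl⟩
  · rw [eval_kRelator_eq_one_iff]
    exact (uProd_gvert_ga _ _).trans
      (congrArg (fun v => gvert v.1 v.2) (retractVert_parent n τ).symm)
  · rw [eval_kRelator_eq_one_iff]
    exact (uProd_gvert_gb _ _ _).trans
      (congrArg (fun v => gvert v.1 v.2) (retractVert_append n τ i).symm)
  · exact (eval_tRelator_eq_one_iff i).2 (gt'_mul_gb_mul_inv i)

def retraction : G →* G :=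
  PresentedGroup.toGroup <|
    PresentedGroup.lift_eq_one_of_eval fun _ => eval_retractGen_of_mem_GRelWords

theorem retraction_of (x : GGen) : retraction (PresentedGroup.of x) = retractGen x :=
  PresentedGroup.toGroup.of _

theorem leftInverse_retraction (ι : G →* G)
    (hvert : ∀ (n : ℕ) (τ : List ℤ), ι (gvert n τ) = gvert (n + 1) τ)
    (ha : ι ga = ga) (hb : ∀ i : ℤ, ι (gb i) = gb i) (ht : ι gt' = gt') :
    Function.LeftInverse retraction ι := by
  suffices retraction.comp ι = MonoidHom.id G from DFunLike.congr_fun this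
  refine PresentedGroup.ext fun x => ?_
  rcases x with _ | (⟨n, τ⟩ | _ | i)
  · exact (congrArg retraction ht).trans (retraction_of none)
  · exact (congrArg retraction (hvert n τ)).trans (retraction_of _)
  · exact (congrArg retraction ha).trans (retraction_of _)
  · exact (congrArg retraction (hb i)).trans (retraction_of _)

end Retraction

section Generation

theorem gt'_mem_H : gt' ∈ H := Subgroup.subset_closure (by simp)

theorem ga_mem_H : ga ∈ H := Subgroup.subset_closure (by simp)

theorem gb_mem_H (i : ℤ) : gb i ∈ H := by
  induction i using Int.induction_on with
  | zero => exact Subgroup.subset_closure (by simp)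
  | succ i ih =>
    rw [← gt'_mul_gb_mul_inv i]
    exact mul_mem (mul_mem gt'_mem_H ih) (inv_mem gt'_mem_H)
  | pred i ih =>
    have h := gt'_mul_gb_mul_inv (-i - 1)
    rw [sub_add_cancel] at h
    rw [show gb (-i - 1) = gt'⁻¹ * gb (-i) * gt' by rw [← h]; group]
    exact mul_mem (mul_mem (inv_mem gt'_mem_H) ih) gt'_mem_H

theorem gvert_succ_nil_mem_H (n : ℕ) : gvert (n + 1) [] ∈ H := by
  induction n with
  | zero => exact Subgroup.subset_closure (by simp)
  | succ n ih =>
    have h : uProd (gvert (n + 1) []) ga = gvert (n + 2) [] := uProd_gvert_ga (n + 1) []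
    exact h ▸ uProd_mem ih ga_mem_H

theorem gvert_succ_mem_H (n : ℕ) (τ : List ℤ) : gvert (n + 1) τ ∈ H := by
  induction τ using List.reverseRecOn with
  | nil => exact gvert_succ_nil_mem_H n
  | append_singleton τ i ih => exact uProd_gvert_gb _ τ i ▸ uProd_mem ih (gb_mem_H i)

theorem range_eq_H (ι : G →* G)
    (hvert : ∀ (n : ℕ) (τ : List ℤ), ι (gvert n τ) = gvert (n + 1) τ)
    (ha : ι ga = ga) (hb : ∀ i : ℤ, ι (gb i) = gb i) (ht : ι gt' = gt') :
    ι.range = H := by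
  apply le_antisymm
  · rintro _ ⟨g, rfl⟩
    refine PresentedGroup.generated_by _ (H.comap ι) (fun x => ?_) g
    rcases x with _ | (⟨n, τ⟩ | _ | i)
    · exact (congrArg (· ∈ H) ht).mpr gt'_mem_H
    · exact (congrArg (· ∈ H) (hvert n τ)).mpr (gvert_succ_mem_H n τ)
    · exact (congrArg (· ∈ H) ha).mpr ga_mem_H
    · exact (congrArg (· ∈ H) (hb i)).mpr (gb_mem_H i)
  · refine (Subgroup.closure_le _).2 ?_
    simp only [Set.insert_subset_iff, Set.singleton_subset_iff, SetLike.mem_coe]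
    exact ⟨⟨gvert 0 [], hvert 0 []⟩, ⟨ga, ha⟩, ⟨gb 0, hb 0⟩, ⟨gt', ht⟩⟩

end Generation

/-- The homomorphism `ι : G → G` determined by `ι((n,τ)) = (n+1,τ)`, `ι(a) = a`, `ι(bᵢ) = bᵢ`
and `ι(t) = t` is injective with image exactly `H`; in particular `H ≅ G`. -/
theorem stmt6 (ι : G →* G)
    (hvert : ∀ (n : ℕ) (τ : List ℤ), ι (gvert n τ) = gvert (n + 1) τ)
    (ha : ι ga = ga) (hb : ∀ i : ℤ, ι (gb i) = gb i) (ht : ι gt' = gt') :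
    Function.Injective ι ∧ ι.range = H ∧ Nonempty (H ≃* G) := by
  have hinj : Function.Injective ι := (leftInverse_retraction ι hvert ha hb ht).injective
  have hrange : ι.range = H := range_eq_H ι hvert ha hb ht
  exact ⟨hinj, hrange,
    ⟨(MulEquiv.subgroupCongr hrange.symm).trans (MonoidHom.ofInjective hinj).symm⟩⟩
end

section
/- The given presentation of K satisfies the C'(1/10) small cancellation condition. -/
/-- A word is reduced if it contains no adjacent cancelling pair. -/
def IsReducedWord {α : Type} [DecidableEq α] (w : Word α) : Prop := FreeGroup.reduce w = w

/-- The formal inverse of a word. -/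
def wordInv {α : Type} (w : Word α) : Word α := (w.map fun p => (p.1, !p.2)).reverse

/-- `w` is a cyclic permutation of `v`. -/
def IsCyclicPermOf {α : Type} (w v : Word α) : Prop := ∃ x y, v = x ++ y ∧ w = y ++ x

/-- A word is cyclically reduced if it is reduced even when read cyclically. -/
def IsCyclicallyReduced {α : Type} [DecidableEq α] (w : Word α) : Prop := IsReducedWord (w ++ w)

/-- `r'` is the cyclic reduction of `r`: `r'` is cyclically reduced and the reduced form of `r`
is `c⁻¹ r' c` for some word `c`. -/
def IsCyclicReductionOf {α : Type} [DecidableEq α] (r' r : Word α) : Prop :=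
  IsCyclicallyReduced r' ∧ ∃ c : Word α, FreeGroup.reduce r = wordInv c ++ r' ++ c

/-- The symmetrized closure of a set of relators: all cyclic permutations of the cyclic
reductions of the relators and of their inverses. -/
def symmClosure {α : Type} [DecidableEq α] (R : Set (Word α)) : Set (Word α) :=
  { w | ∃ r ∈ R, ∃ r', IsCyclicReductionOf r' r ∧
      (IsCyclicPermOf w r' ∨ IsCyclicPermOf w (wordInv r')) }

/-- A word `w` is Dehn-minimal w.r.t. relators `R` if it contains no subword `v` which is also
a subword of some `r` in the symmetrized closure of `R` with `|v| > |r|/2`. -/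
def DehnMinimal {α : Type} [DecidableEq α] (R : Set (Word α)) (w : Word α) : Prop :=
  ∀ v r : Word α, r ∈ symmClosure R → v <:+: w → v <:+: r → 2 * v.length ≤ r.length

/-- A piece: a reduced word which is a common initial segment of two distinct elements of the
symmetrized closure of the relator set. -/
def IsPiece {α : Type} [DecidableEq α] (R : Set (Word α)) (p : Word α) : Prop :=
  IsReducedWord p ∧ ∃ r₁ ∈ symmClosure R, ∃ r₂ ∈ symmClosure R, r₁ ≠ r₂ ∧ p <+: r₁ ∧ p <+: r₂

/-!
Every symmetrized relator is a cyclic conjugate of a relator `u(v, y) w⁻¹` of length `5151`, or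
of its inverse, so `C'(1/10)` says that two distinct symmetrized relators share no prefix of
length `516`. A relator has a single negative letter and its inverse a single positive one, so
such a prefix cannot be shared by conjugates of a relator and of an inverse relator. In the cyclic
word `x y x² y ⋯ x¹⁰⁰ y z⁻¹` the runs of `x` between consecutive other letters have the pairwise
distinct lengths `1, 2, …, 100, 0`; any `202` consecutive letters contain a complete run, whose
length determines the rotation. A window of `516` letters also contains the letters `v` and `y`,
which determine the relator. The inverse case follows by inverting.
-/

open List

lemma take_eq_take_of_prefix {α : Type*} {p r : List α} (h : p <+: r) {k : ℕ}
    (hk : k ≤ p.length) : r.take k = p.take k := by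
  rw [prefix_iff_eq_take.mp h, take_take, min_eq_left hk]

lemma countP_take_rotate_le {α : Type*} (p : α → Bool) (l : List α) (s N : ℕ) :
    ((l.rotate s).take N).countP p ≤ l.countP p :=
  ((take_sublist _ _).countP_le).trans_eq ((rotate_perm _ _).countP_eq _)

lemma take_rotate_eq_take_drop_append_self {α : Type*} {l : List α} {n N : ℕ}
    (hn : n ≤ l.length) (hN : N ≤ l.length) :
    (l.rotate n).take N = ((l ++ l).drop n).take N := by
  rw [rotate_eq_drop_append_take hn, drop_append_of_le_length hn, take_append, take_append,
    take_take, length_drop, min_eq_left (by omega)]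

/-- The cyclic word whose consecutive markers (`false`) are separated by `gs[0], gs[1], …` ordinary
letters (`true`). -/
def gapWord (gs : List ℕ) : List Bool := gs.flatMap fun g => replicate g true ++ [false]

@[simp] lemma gapWord_nil : gapWord [] = [] := rfl

@[simp] lemma gapWord_cons (g : ℕ) (gs : List ℕ) :
    gapWord (g :: gs) = replicate g true ++ false :: gapWord gs := by
  simp [gapWord]

@[simp] lemma gapWord_append (a b : List ℕ) : gapWord (a ++ b) = gapWord a ++ gapWord b := by
  simp [gapWord]

lemma length_gapWord (gs : List ℕ) : (gapWord gs).length = gs.sum + gs.length := by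
  induction gs with
  | nil => rfl
  | cons g gs ih => simp [ih]; omega

lemma count_false_gapWord (gs : List ℕ) : (gapWord gs).count false = gs.length := by
  induction gs with
  | nil => rfl
  | cons g gs ih => simp [ih, count_replicate]

lemma drop_gapWord_cons_of_le {g i : ℕ} (gs : List ℕ) (hi : i ≤ g) :
    (gapWord (g :: gs)).drop i = replicate (g - i) true ++ false :: gapWord gs := by
  rw [gapWord_cons, drop_append_of_le_length (by simpa), drop_replicate]

lemma drop_gapWord_cons_add (g k : ℕ) (gs : List ℕ) :
    (gapWord (g :: gs)).drop (g + 1 + k) = (gapWord gs).drop k := by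
  rw [gapWord_cons, ← drop_drop, drop_append]
  simp

lemma eq_of_replicate_true_prefix {g h : ℕ} {l : List Bool}
    (H : replicate g true ++ [false] <+: replicate h true ++ false :: l) : g = h := by
  induction g generalizing h with
  | zero => cases h <;> simp_all [replicate_succ]
  | succ g ih =>
    cases h with
    | zero => simp [replicate_succ] at H
    | succ h => simp only [replicate_succ, cons_append, prefix_cons_inj] at H; rw [ih H]

lemma exists_gap_prefix_drop_gapWord {G : ℕ} {hs : List ℕ} (hG : ∀ g ∈ hs, g ≤ G) {i : ℕ}
    (hi : i + G + 1 ≤ (gapWord hs).length) :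
    ∃ g ≤ G, replicate g true ++ [false] <+: (gapWord hs).drop i := by
  induction hs generalizing i with
  | nil => simp at hi
  | cons h hs ih =>
    simp only [mem_cons, forall_eq_or_imp] at hG
    rcases le_or_gt i h with hih | hhi
    · refine ⟨h - i, by omega, ?_⟩
      rw [drop_gapWord_cons_of_le hs hih]
      simp
    · obtain ⟨k, rfl⟩ : ∃ k, i = h + 1 + k := ⟨i - (h + 1), by omega⟩
      rw [drop_gapWord_cons_add]
      exact ih hG.2 (by simp at hi ⊢; omega)

def markerGap (g : ℕ) : List Bool := false :: (replicate g true ++ [false])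

lemma exists_markerGap_prefix_drop_gapWord {G : ℕ} {hs : List ℕ} (hG : ∀ g ∈ hs, g ≤ G)
    {i : ℕ} (hi : i + 2 * G + 2 ≤ (gapWord hs).length) :
    ∃ j ≤ G, ∃ g ≤ G, markerGap g <+: (gapWord hs).drop (i + j) := by
  obtain ⟨j, hj, t, ht⟩ := exists_gap_prefix_drop_gapWord hG (i := i) (by omega)
  have hdrop : (gapWord hs).drop (i + j) = false :: t := by
    rw [← drop_drop, ← ht, append_assoc, drop_left' (by simp)]
    rfl
  obtain ⟨g, hg, hpre⟩ := exists_gap_prefix_drop_gapWord hG (i := i + j + 1) (by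
    have := congrArg length hdrop
    simp at this
    omega)
  refine ⟨j, hj, g, hg, ?_⟩
  rw [hdrop, markerGap, prefix_cons_inj]
  rwa [← drop_drop, hdrop] at hpre

lemma exists_split_of_markerGap_prefix {g i : ℕ} {hs : List ℕ}
    (h : markerGap g <+: (gapWord hs).drop i) :
    ∃ a b, hs = a ++ g :: b ∧ (gapWord a).length = i + 1 := by
  induction hs generalizing i with
  | nil => simp [markerGap] at h
  | cons h₀ hs ih =>
    rcases lt_trichotomy i h₀ with hlt | rfl | hgt
    · rw [drop_gapWord_cons_of_le hs hlt.le, show h₀ - i = (h₀ - i - 1) + 1 by omega,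
        replicate_succ] at h
      simp [markerGap] at h
    · rw [drop_gapWord_cons_of_le hs le_rfl, Nat.sub_self, replicate_zero, nil_append,
        markerGap, prefix_cons_inj] at h
      cases hs with
      | nil => simp at h
      | cons g' hs =>
        rw [gapWord_cons] at h
        obtain rfl := eq_of_replicate_true_prefix h
        exact ⟨[i], hs, rfl, by simp⟩
    · obtain ⟨k, rfl⟩ : ∃ k, i = h₀ + 1 + k := ⟨i - (h₀ + 1), by omega⟩
      rw [drop_gapWord_cons_add] at h
      obtain ⟨a, b, rfl, ha⟩ := ih h
      exact ⟨h₀ :: a, b, rfl, by simp at ha ⊢; omega⟩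

lemma eq_take_idxOf_of_nodup {α : Type*} [DecidableEq α] {l a b : List α} {x : α} (hl : l.Nodup)
    (h : l = a ++ x :: b) : a = l.take (l.idxOf x) := by
  have hlen : a.length < l.length := by simp [h]
  have hx : l[a.length] = x := by simp [h]
  rw [← hx, hl.idxOf_getElem, h, take_left' rfl]

lemma length_gapWord_mod_eq {gs a b : List ℕ} {g : ℕ} (hgs : gs.Nodup)
    (h : gs ++ gs = a ++ g :: b) :
    (gapWord a).length % (gapWord gs).length =
      (gapWord (gs.take (gs.idxOf g))).length % (gapWord gs).length := by
  rcases append_eq_append_iff.mp h with ⟨c, rfl, hc⟩ | ⟨c, hgs', hc⟩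
  · rw [eq_take_idxOf_of_nodup hgs hc, gapWord_append, length_append, Nat.add_mod_left]
  · cases c with
    | nil =>
      simp only [append_nil, nil_append] at hgs' hc
      subst hgs'
      rw [← eq_take_idxOf_of_nodup hgs (a := []) hc.symm]
      simp
    | cons g' c =>
      obtain ⟨rfl, -⟩ := cons_eq_cons.mp hc
      rw [← eq_take_idxOf_of_nodup hgs hgs']

lemma drop_take_rotate_gapWord {gs : List ℕ} {N : ℕ} (hpos : 0 < N) (hN : N ≤ (gapWord gs).length)
    (s j : ℕ) :
    (((gapWord gs).rotate s).take N).drop j =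
      ((gapWord (gs ++ gs)).drop (s % (gapWord gs).length + j)).take (N - j) := by
  rw [← rotate_mod, take_rotate_eq_take_drop_append_self (Nat.mod_lt _ (by omega)).le hN,
    drop_take, drop_drop, gapWord_append]

lemma exists_markerGap_prefix_drop_take_rotate {G N : ℕ} {gs : List ℕ} (hG : ∀ g ∈ gs, g ≤ G)
    (hN : 2 * G + 2 ≤ N) (hNL : N ≤ (gapWord gs).length) (s : ℕ) :
    ∃ j g, markerGap g <+: (((gapWord gs).rotate s).take N).drop j := by
  have hpos : 0 < (gapWord gs).length := by omega
  have hmod := Nat.mod_lt s hpos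
  obtain ⟨j, hj, g, hg, hpre⟩ := exists_markerGap_prefix_drop_gapWord (hs := gs ++ gs)
    (i := s % (gapWord gs).length) (by simpa [or_imp, forall_and] using hG)
    (by rw [gapWord_append, length_append]; omega)
  refine ⟨j, g, ?_⟩
  rw [drop_take_rotate_gapWord (by omega) hNL, prefix_take_iff]
  exact ⟨hpre, by simp [markerGap]; omega⟩

section RotationFromWindow

variable {α : Type*} (f : α → Bool) {R : List α} {gs : List ℕ} {G N : ℕ}

theorem two_le_countP_take_rotate (hR : R.map f = gapWord gs) (hG : ∀ g ∈ gs, g ≤ G)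
    (hN : 2 * G + 2 ≤ N) (hNR : N ≤ R.length) (s : ℕ) :
    2 ≤ ((R.rotate s).take N).countP (fun a => !f a) := by
  have hL : R.length = (gapWord gs).length := by rw [← hR, length_map]
  obtain ⟨j, g, hpre⟩ := exists_markerGap_prefix_drop_take_rotate hG hN (hL ▸ hNR) s
  have := (hpre.sublist.trans (drop_sublist _ _)).count_le false
  rw [← hR, ← map_rotate, ← map_take, count, countP_map] at this
  simpa [markerGap, Function.comp_def, countP_replicate] using this

/-- Any `2 * G + 2` consecutive letters contain a complete gap, and as the gaps are pairwise
distinct its length tells where it sits. -/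
theorem rotate_eq_of_take_rotate_eq (hR : R.map f = gapWord gs) (hgs : gs.Nodup)
    (hG : ∀ g ∈ gs, g ≤ G) (hN : 2 * G + 2 ≤ N) (hNR : N ≤ R.length) {s₁ s₂ : ℕ}
    (h : (R.rotate s₁).take N = (R.rotate s₂).take N) : R.rotate s₁ = R.rotate s₂ := by
  have hL : R.length = (gapWord gs).length := by rw [← hR, length_map]
  have hD : ((gapWord gs).rotate s₁).take N = ((gapWord gs).rotate s₂).take N := by
    rw [← hR, ← map_rotate, ← map_rotate, ← map_take, ← map_take, h]
  obtain ⟨j, g, hpre⟩ := exists_markerGap_prefix_drop_take_rotate hG hN (hL ▸ hNR) s₁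
  have key : ∀ s, markerGap g <+: (((gapWord gs).rotate s).take N).drop j →
      s % (gapWord gs).length + (j + 1) ≡ (gapWord (gs.take (gs.idxOf g))).length
        [MOD (gapWord gs).length] := by
    intro s hs
    rw [drop_take_rotate_gapWord (by omega) (hL ▸ hNR)] at hs
    obtain ⟨a, b, hab, ha⟩ := exists_split_of_markerGap_prefix (prefix_take_iff.mp hs).1
    rw [← add_assoc, ← ha]
    exact length_gapWord_mod_eq hgs hab
  have hmod := Nat.ModEq.add_right_cancel' _ ((key s₁ hpre).trans (key s₂ (hD ▸ hpre)).symm)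
  rw [Nat.ModEq, Nat.mod_mod, Nat.mod_mod] at hmod
  rw [← rotate_mod R s₁, ← rotate_mod R s₂, hL, hmod]

end RotationFromWindow

section Words

variable {α : Type}

lemma isRotated_of_isCyclicPermOf {w v : Word α} (h : IsCyclicPermOf w v) : v ~r w := by
  obtain ⟨x, y, rfl, rfl⟩ := h
  exact isRotated_append

lemma wordInv_wordInv (w : Word α) : wordInv (wordInv w) = w := by
  simp [wordInv, Function.comp_def]

lemma List.IsRotated.wordInv {v w : Word α} (h : v ~r w) : wordInv v ~r wordInv w :=
  (h.map _).reverse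

lemma List.IsPrefix.wordInv {p w : Word α} (h : p <+: w) : wordInv p <:+ wordInv w :=
  reverse_suffix.mpr (h.map _)

lemma length_wordInv (w : Word α) : (wordInv w).length = w.length := by
  simp [wordInv]

lemma countP_snd_wordInv (w : Word α) : (wordInv w).countP (·.2) = w.countP (!·.2) := by
  simp [wordInv, countP_map, Function.comp_def]

variable [DecidableEq α]

lemma eq_of_isCyclicReductionOf {r r' : Word α} (hr : ∀ a ∈ r, ∀ b ∈ r, a.1 = b.1 → a.2 = b.2)
    (h : IsCyclicReductionOf r' r) : r' = r := by
  obtain ⟨-, c, hc⟩ := h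
  have hred : FreeGroup.IsReduced r := (pairwise_of_forall_mem_list hr).isChain
  rw [hred.reduce_eq] at hc
  cases c with
  | nil => simpa [wordInv] using hc.symm
  | cons d c =>
    have hd : d ∈ r := by simp [hc]
    have hd' : (d.1, !d.2) ∈ r := by simp [hc, wordInv]
    simpa using hr _ hd _ hd' rfl

end Words

namespace K

def edgeLetter : Option ℤ → KGen
  | none => .a
  | some i => .b i

def edgeEnd (n : ℕ) (τ : List ℤ) : Option ℤ → ℕ × List ℤ
  | none => parent n τ
  | some i => (n, τ ++ [i])

def relator (n : ℕ) (τ : List ℤ) (o : Option ℤ) : Word KGen :=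
  uWord (.vert n τ) (edgeLetter o) ++ [(.vert (edgeEnd n τ o).1 (edgeEnd n τ o).2, false)]

def isPosVertex : KGen × Bool → Bool
  | (.vert _ _, true) => true
  | _ => false

/-- The gaps between the non-vertex letters of the cyclic word `x y x² y ⋯ x¹⁰⁰ y z⁻¹`. -/
def relatorGaps : List ℕ := (range 100).map (· + 1) ++ [0]

variable {n : ℕ} {τ : List ℤ} {o : Option ℤ}

lemma exists_eq_relator_of_mem {w : Word KGen} (hw : w ∈ KRelWords) :
    ∃ n τ o, w = relator n τ o := by
  rcases hw with ⟨n, τ, rfl⟩ | ⟨n, τ, i, rfl⟩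
  · exact ⟨n, τ, none, rfl⟩
  · exact ⟨n, τ, some i, rfl⟩

lemma edgeEnd_ne : edgeEnd n τ o ≠ (n, τ) := by
  rcases o with _ | i
  · rcases τ with _ | ⟨a, τ⟩
    · simp [edgeEnd, parent]
    · simp only [edgeEnd, parent, ne_eq, Prod.mk.injEq, true_and]
      intro h
      simpa using congrArg length h
  · simp [edgeEnd]

lemma mem_relator {l : KGen × Bool} (hl : l ∈ relator n τ o) :
    l = (.vert n τ, true) ∨ l = (edgeLetter o, true) ∨
      l = (.vert (edgeEnd n τ o).1 (edgeEnd n τ o).2, false) := by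
  simp only [relator, uWord, mem_append, mem_flatMap, mem_replicate, mem_singleton] at hl
  tauto

lemma relator_letters_not_inverse :
    ∀ a ∈ relator n τ o, ∀ b ∈ relator n τ o, a.1 = b.1 → a.2 = b.2 := by
  have hv : KGen.vert n τ ≠ .vert (edgeEnd n τ o).1 (edgeEnd n τ o).2 := fun h ↦ by
    injection h with h₁ h₂
    exact edgeEnd_ne (Prod.ext h₁.symm h₂.symm)
  have he : ∀ m σ, edgeLetter o ≠ .vert m σ := by rcases o <;> simp [edgeLetter]
  intro a ha b hb hab
  rcases mem_relator ha with rfl | rfl | rfl <;> rcases mem_relator hb with rfl | rfl | rfl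
  all_goals
    first
    | rfl
    | exact absurd hab hv
    | exact absurd hab.symm hv
    | exact absurd hab (he _ _)
    | exact absurd hab.symm (he _ _)

lemma map_isPosVertex_relator : (relator n τ o).map isPosVertex = gapWord relatorGaps := by
  rcases o with _ | i <;>
    simp [relator, uWord, gapWord, relatorGaps, map_flatMap, flatMap_map, isPosVertex, edgeLetter]

lemma length_relator : (relator n τ o).length = 5151 := by
  rw [← length_map isPosVertex, map_isPosVertex_relator, length_gapWord]
  decide

lemma relatorGaps_nodup : relatorGaps.Nodup := by decide

lemma relatorGaps_le : ∀ g ∈ relatorGaps, g ≤ 100 := by decide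

lemma edgeLetter_injective : Function.Injective edgeLetter := by
  rintro (_ | i) (_ | j) h <;> simp_all [edgeLetter]

lemma countP_not_snd_relator : (relator n τ o).countP (fun l => !l.2) = 1 := by
  simp [relator, uWord, countP_flatMap, countP_replicate, Function.comp_def]

lemma countP_not_isPosVertex_relator : (relator n τ o).countP (fun l => !isPosVertex l) = 101 := by
  have h := count_false_gapWord relatorGaps
  rw [← map_isPosVertex_relator (n := n) (τ := τ) (o := o), count, countP_map] at h
  simpa [Function.comp_def, relatorGaps] using h

lemma isPosVertex_edgeLetter : isPosVertex (edgeLetter o, true) = false := by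
  rcases o <;> rfl

lemma eq_of_mem_relator_of_isPosVertex {l : KGen × Bool} (hl : l ∈ relator n τ o)
    (h : isPosVertex l = true) : l = (.vert n τ, true) := by
  rcases mem_relator hl with rfl | rfl | rfl
  · rfl
  · simp [isPosVertex_edgeLetter] at h
  · simp [isPosVertex] at h

lemma eq_of_mem_relator_of_snd {l : KGen × Bool} (hl : l ∈ relator n τ o)
    (h₁ : isPosVertex l = false) (h₂ : l.2 = true) : l = (edgeLetter o, true) := by
  rcases mem_relator hl with rfl | rfl | rfl
  · simp [isPosVertex] at h₁
  · rfl
  · simp at h₂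

lemma vertex_mem_take_rotate_relator (s : ℕ) :
    (KGen.vert n τ, true) ∈ ((relator n τ o).rotate s).take 516 := by
  obtain ⟨l, hl, hpos⟩ : ∃ l ∈ ((relator n τ o).rotate s).take 516, isPosVertex l = true := by
    by_contra! hno
    have h₁ : (((relator n τ o).rotate s).take 516).countP (fun l => !isPosVertex l) = 516 := by
      rw [countP_eq_length.mpr (by simpa using hno)]
      simp [length_relator]
    have h₂ := countP_take_rotate_le (fun l => !isPosVertex l) (relator n τ o) s 516
    rw [countP_not_isPosVertex_relator] at h₂
    omega
  rwa [← eq_of_mem_relator_of_isPosVertex (mem_rotate.mp (mem_of_mem_take hl)) hpos]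

lemma edgeLetter_mem_take_rotate_relator (s : ℕ) :
    (edgeLetter o, true) ∈ ((relator n τ o).rotate s).take 516 := by
  obtain ⟨l, hl, h₁, h₂⟩ :
      ∃ l ∈ ((relator n τ o).rotate s).take 516, isPosVertex l = false ∧ l.2 = true := by
    by_contra! hno
    have hmarkers := two_le_countP_take_rotate isPosVertex (N := 516)
      (map_isPosVertex_relator (n := n) (τ := τ) (o := o)) relatorGaps_le (by norm_num)
      (by rw [length_relator]; norm_num) s
    have hle : (((relator n τ o).rotate s).take 516).countP (fun l => !isPosVertex l) ≤
        (((relator n τ o).rotate s).take 516).countP (fun l => !l.2) :=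
      countP_mono_left fun l hl h ↦ by simpa using hno l hl (by simpa using h)
    have hinv := countP_take_rotate_le (fun l => !l.2) (relator n τ o) s 516
    rw [countP_not_snd_relator] at hinv
    omega
  rwa [← eq_of_mem_relator_of_snd (mem_rotate.mp (mem_of_mem_take hl)) h₁ h₂]

section

variable {n₁ n₂ : ℕ} {τ₁ τ₂ : List ℤ} {o₁ o₂ : Option ℤ}

lemma eq_of_isRotated_relator_of_take_eq {w₁ w₂ : Word KGen} (h₁ : relator n₁ τ₁ o₁ ~r w₁)
    (h₂ : relator n₂ τ₂ o₂ ~r w₂) (h : w₁.take 516 = w₂.take 516) : w₁ = w₂ := by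
  obtain ⟨s₁, rfl⟩ := h₁
  obtain ⟨s₂, rfl⟩ := h₂
  have mem₂ : ∀ l ∈ ((relator n₁ τ₁ o₁).rotate s₁).take 516, l ∈ relator n₂ τ₂ o₂ :=
    fun l hl ↦ mem_rotate.mp (mem_of_mem_take (h ▸ hl))
  have hv := eq_of_mem_relator_of_isPosVertex (mem₂ _ (vertex_mem_take_rotate_relator s₁)) rfl
  have hy := eq_of_mem_relator_of_snd (mem₂ _ (edgeLetter_mem_take_rotate_relator s₁))
    isPosVertex_edgeLetter rfl
  simp only [Prod.mk.injEq, KGen.vert.injEq, and_true] at hv hy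
  obtain ⟨rfl, rfl⟩ := hv
  obtain rfl := edgeLetter_injective hy
  exact rotate_eq_of_take_rotate_eq isPosVertex map_isPosVertex_relator relatorGaps_nodup
    relatorGaps_le (by norm_num) (by rw [length_relator]; norm_num) h

lemma eq_of_isRotated_relator_of_suffix {q u₁ u₂ : Word KGen} (h₁ : relator n₁ τ₁ o₁ ~r u₁)
    (h₂ : relator n₂ τ₂ o₂ ~r u₂) (hq₁ : q <:+ u₁) (hq₂ : q <:+ u₂) (hq : 516 ≤ q.length) :
    u₁ = u₂ := by
  -- rotating by `5151 - 516` brings the last `516` letters to the front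
  have key : ∀ u : Word KGen, u.length = 5151 → q <:+ u →
      (u.rotate 4635).take 516 = q.drop (q.length - 516) := by
    rintro u hu ⟨t, rfl⟩
    rw [length_append] at hu
    rw [rotate_eq_drop_append_take (by simp; omega), take_left' (by simp; omega), drop_append,
      drop_eq_nil_of_le (by omega), nil_append, show 4635 - t.length = q.length - 516 by omega]
  refine rotate_eq_rotate.mp (eq_of_isRotated_relator_of_take_eq (h₁.trans ⟨4635, rfl⟩)
    (h₂.trans ⟨4635, rfl⟩) ?_)
  rw [key u₁ (h₁.perm.length_eq ▸ length_relator) hq₁,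
    key u₂ (h₂.perm.length_eq ▸ length_relator) hq₂]

lemma false_of_isRotated_relator_of_isRotated_wordInv {p w₁ w₂ : Word KGen}
    (h₁ : relator n₁ τ₁ o₁ ~r w₁) (h₂ : wordInv (relator n₂ τ₂ o₂) ~r w₂) (hp₁ : p <+: w₁)
    (hp₂ : p <+: w₂) (hp : 3 ≤ p.length) : False := by
  have c₁ : p.countP (fun l => !l.2) ≤ 1 := by
    have := hp₁.sublist.countP_le (p := fun l => !l.2)
    rwa [← h₁.perm.countP_eq, countP_not_snd_relator] at this
  have c₂ : p.countP (fun l => l.2) ≤ 1 := by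
    have := hp₂.sublist.countP_le (p := fun l => l.2)
    rwa [← h₂.perm.countP_eq, countP_snd_wordInv, countP_not_snd_relator] at this
  have := length_eq_countP_add_countP (fun l : KGen × Bool => l.2) (l := p)
  simp only [Bool.not_eq_true, Bool.decide_eq_false] at this
  omega

end

lemma isRotated_of_mem_symmClosure {r : Word KGen} (hr : r ∈ symmClosure KRelWords) :
    ∃ n τ o, relator n τ o ~r r ∨ wordInv (relator n τ o) ~r r := by
  obtain ⟨R, hR, r', hr', hperm⟩ := hr
  obtain ⟨n, τ, o, rfl⟩ := exists_eq_relator_of_mem hR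
  rw [eq_of_isCyclicReductionOf relator_letters_not_inverse hr'] at hperm
  exact ⟨n, τ, o, hperm.imp isRotated_of_isCyclicPermOf isRotated_of_isCyclicPermOf⟩

lemma length_of_mem_symmClosure {r : Word KGen} (hr : r ∈ symmClosure KRelWords) :
    r.length = 5151 := by
  obtain ⟨n, τ, o, h | h⟩ := isRotated_of_mem_symmClosure hr
  · rw [← h.perm.length_eq, length_relator]
  · rw [← h.perm.length_eq, length_wordInv, length_relator]

lemma eq_of_prefix_of_mem_symmClosure {p r₁ r₂ : Word KGen} (hr₁ : r₁ ∈ symmClosure KRelWords)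
    (hr₂ : r₂ ∈ symmClosure KRelWords) (hp₁ : p <+: r₁) (hp₂ : p <+: r₂) (hp : 516 ≤ p.length) :
    r₁ = r₂ := by
  obtain ⟨n₁, τ₁, o₁, h₁ | h₁⟩ := isRotated_of_mem_symmClosure hr₁ <;>
    obtain ⟨n₂, τ₂, o₂, h₂ | h₂⟩ := isRotated_of_mem_symmClosure hr₂
  · exact eq_of_isRotated_relator_of_take_eq h₁ h₂
      ((take_eq_take_of_prefix hp₁ hp).trans (take_eq_take_of_prefix hp₂ hp).symm)
  · exact (false_of_isRotated_relator_of_isRotated_wordInv h₁ h₂ hp₁ hp₂ (by omega)).elim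
  · exact (false_of_isRotated_relator_of_isRotated_wordInv h₂ h₁ hp₂ hp₁ (by omega)).elim
  · have h₁' := h₁.wordInv
    have h₂' := h₂.wordInv
    rw [wordInv_wordInv] at h₁' h₂'
    have := eq_of_isRotated_relator_of_suffix h₁' h₂' hp₁.wordInv hp₂.wordInv
      (by rwa [length_wordInv])
    rw [← wordInv_wordInv r₁, this, wordInv_wordInv]

end K

theorem stmt11_general (p r : Word KGen) (hp : IsPiece KRelWords p)
    (hr : r ∈ symmClosure KRelWords) :
    10 * p.length < r.length := by
  obtain ⟨-, r₁, hr₁, r₂, hr₂, hne, hp₁, hp₂⟩ := hp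
  rw [K.length_of_mem_symmClosure hr]
  by_contra! hlong
  exact hne (K.eq_of_prefix_of_mem_symmClosure hr₁ hr₂ hp₁ hp₂ (by omega))

/-- The presentation of `K` satisfies the `C'(1/10)` small cancellation condition: every piece
`p` which is an initial segment of a symmetrized relator `r` satisfies `|p| < |r|/10`. -/
theorem stmt11 (p r : Word KGen) (hp : IsPiece KRelWords p)
    (hr : r ∈ symmClosure KRelWords) (hpr : p <+: r) :
    10 * p.length < r.length :=
  stmt11_general p r hp hr
end
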